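/- arXiv:1511.02897 — 4 statements merged into one kernel-verified Lean document; each statement's English description precedes it below -/
import Mathlib

section
/- Let g : D → D be holomorphic on the open unit disc with w, g(w) ∈ D. If |g(w)| > |w|, then 2|g(w) - w| / |1 - w·conj(g(w))| ≥ 1 / ( (1 - |g(w)|)/(|g(w)| - |w|) + 1/2 ). -/
/-!
With `a = ‖w‖ < b = ‖g w‖`, writing `1 - w z̄ = (1 - ‖z‖²) + z̄ (z - w)` for `z = g w` and
using `‖z - w‖ ≥ b - a` gives the classical bound `‖z - w‖ / ‖1 - w z̄‖ ≥ (b - a) / (1 - a b)`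
on the pseudo-hyperbolic distance. The claim follows since `1 - a b ≤ 2 - a - b`, i.e.
`(1 - a)(1 - b) ≥ 0`, and its right-hand side equals `2 (b - a) / (2 - a - b)`.
-/

open ComplexConjugate

namespace Complex

theorem norm_one_sub_mul_conj_le (z w : ℂ) (hz : ‖z‖ ≤ 1) :
    ‖1 - w * conj z‖ ≤ (1 - ‖z‖ ^ 2) + ‖z‖ * ‖z - w‖ := by
  have hsplit : 1 - w * conj z = (1 - z * conj z) + conj z * (z - w) := by ring
  have hself : ‖1 - z * conj z‖ = 1 - ‖z‖ ^ 2 := by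
    rw [mul_conj, ← Complex.sq_norm, ← ofReal_one, ← ofReal_sub, norm_real,
      Real.norm_of_nonneg (by nlinarith [norm_nonneg z])]
  calc ‖1 - w * conj z‖ ≤ ‖1 - z * conj z‖ + ‖conj z * (z - w)‖ := hsplit ▸ norm_add_le _ _
    _ = (1 - ‖z‖ ^ 2) + ‖z‖ * ‖z - w‖ := by rw [hself, norm_mul, RCLike.norm_conj]

theorem sub_norm_mul_norm_one_sub_mul_conj_le (z w : ℂ) (hz : ‖z‖ ≤ 1) (hw : ‖w‖ ≤ 1) :
    (‖z‖ - ‖w‖) * ‖1 - w * conj z‖ ≤ ‖z - w‖ * (1 - ‖z‖ * ‖w‖) := by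
  rcases le_or_gt ‖w‖ ‖z‖ with hwz | hzw
  · have hdist : ‖z‖ - ‖w‖ ≤ ‖z - w‖ := norm_sub_norm_le z w
    calc (‖z‖ - ‖w‖) * ‖1 - w * conj z‖
        ≤ (‖z‖ - ‖w‖) * ((1 - ‖z‖ ^ 2) + ‖z‖ * ‖z - w‖) :=
          mul_le_mul_of_nonneg_left (norm_one_sub_mul_conj_le z w hz) (sub_nonneg.2 hwz)
      _ ≤ ‖z - w‖ * (1 - ‖z‖ * ‖w‖) := by
          nlinarith [mul_nonneg (by nlinarith [norm_nonneg z] : 0 ≤ 1 - ‖z‖ ^ 2) (sub_nonneg.2 hdist)]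
  · have : 0 ≤ ‖z - w‖ * (1 - ‖z‖ * ‖w‖) := by
      have := mul_le_one₀ hz (norm_nonneg w) hw
      exact mul_nonneg (norm_nonneg _) (by linarith)
    nlinarith [norm_nonneg (1 - w * conj z)]

theorem norm_one_sub_mul_conj_pos {z w : ℂ} (hz : ‖z‖ < 1) (hw : ‖w‖ < 1) :
    0 < ‖1 - w * conj z‖ := by
  have hprod : ‖w * conj z‖ < 1 := by
    rw [norm_mul, RCLike.norm_conj]
    exact mul_lt_one_of_nonneg_of_lt_one_left (norm_nonneg w) hw hz.le
  have := norm_sub_norm_le (1 : ℂ) (w * conj z)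
  rw [norm_one] at this
  linarith

end Complex

theorem stmt2_general (g : ℂ → ℂ)
    (hm : Set.MapsTo g (Metric.ball 0 1) (Metric.ball 0 1))
    (w : ℂ) (hw : w ∈ Metric.ball (0 : ℂ) 1) (hgt : ‖w‖ < ‖g w‖) :
    2 * ‖g w - w‖ / ‖(1 : ℂ) - w * (starRingEnd ℂ) (g w)‖ ≥
      1 / ((1 - ‖g w‖) / (‖g w‖ - ‖w‖) + 1 / 2) := by
  have ha : ‖w‖ < 1 := mem_ball_zero_iff.1 hw
  have hb : ‖g w‖ < 1 := mem_ball_zero_iff.1 (hm hw)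
  have hD := Complex.norm_one_sub_mul_conj_pos hb ha
  have key := Complex.sub_norm_mul_norm_one_sub_mul_conj_le (g w) w hb.le ha.le
  have hab : ‖g w‖ * ‖w‖ < 1 := mul_lt_one_of_nonneg_of_lt_one_left (norm_nonneg _) hb ha.le
  rw [ge_iff_le]
  calc 1 / ((1 - ‖g w‖) / (‖g w‖ - ‖w‖) + 1 / 2)
      = 2 * (‖g w‖ - ‖w‖) / (2 - ‖w‖ - ‖g w‖) := by
        have : ‖g w‖ - ‖w‖ ≠ 0 := by linarith
        field_simp
        ring
    _ ≤ 2 * (‖g w‖ - ‖w‖) / (1 - ‖g w‖ * ‖w‖) :=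
        div_le_div_of_nonneg_left (by linarith) (by linarith) (by nlinarith [norm_nonneg w])
    _ ≤ 2 * ‖g w - w‖ / ‖(1 : ℂ) - w * (starRingEnd ℂ) (g w)‖ := by
        rw [div_le_div_iff₀ (by linarith) hD]
        linarith

theorem stmt2 (g : ℂ → ℂ) (hd : DifferentiableOn ℂ g (Metric.ball 0 1))
    (hm : Set.MapsTo g (Metric.ball 0 1) (Metric.ball 0 1))
    (w : ℂ) (hw : w ∈ Metric.ball (0 : ℂ) 1) (hgt : ‖w‖ < ‖g w‖) :
    2 * ‖g w - w‖ / ‖(1 : ℂ) - w * (starRingEnd ℂ) (g w)‖ ≥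
      1 / ((1 - ‖g w‖) / (‖g w‖ - ‖w‖) + 1 / 2) :=
  stmt2_general g hm w hw hgt
end

section
/- Let f : C → C be holomorphic on the right half-plane H = {Re(z) > c₁}, where c₁ > 1/2, and suppose |f(z) - z - 1| < c₀/(Re z)^r on H for constants c₀ > 0, r > 1. If additionally ∑_{k≥1} c₀/(c₁ + k - 3/2)^r < 1/2, then for every z ∈ H and every n ≥ 1, all iterates f^k(z) for k ≤ n are defined and lie in H, and Re(f^n(z)) > Re(z) + n - ∑_{k=1}^{n} c₀/(Re(z) + k - 3/2)^r. -/
/-!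
Taking real parts, `‖f z - z - 1‖ < c₀ / (Re z)^r` gives `Re f(z) > Re z + 1 - c₀ / (Re z)^r`.
Iterating, the orbit moves right by almost one unit per step: as long as the accumulated error
`∑ c₀ / (Re z + k - 3/2)^r` stays below `1/2` (which the tail condition guarantees),
`Re f^n(z) > Re z + n - 1/2`, so the orbit never leaves `H`, and the error committed at step
`n + 1` is at most `c₀ / (Re z + n - 1/2)^r` because `x ↦ c₀ / x^r` is decreasing.
-/

open Finset

section OrbitBound

variable {x : ℕ → ℝ} {ε : ℝ → ℝ} {c : ℝ}

lemma orbit_bound_succ (hx₀ : c < x 0)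
    (hstep : ∀ n, c < x n → x n + 1 - ε (x n) < x (n + 1))
    (hε : AntitoneOn ε (Set.Ioi (c - 1 / 2)))
    (hsum : ∀ n : ℕ, ∑ k ∈ Icc 1 n, ε (x 0 + k - 3 / 2) < 1 / 2) {n : ℕ} (hc : c < x n)
    (hle : x 0 + n - ∑ k ∈ Icc 1 n, ε (x 0 + k - 3 / 2) ≤ x n) :
    x 0 + (n + 1 : ℕ) - ∑ k ∈ Icc 1 (n + 1), ε (x 0 + k - 3 / 2) < x (n + 1) := by
  have hfar : x 0 + n - 1 / 2 < x n := by linarith [hsum n]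
  have hmem : c - 1 / 2 < x 0 + ((n : ℝ) + 1) - 3 / 2 := by linarith [n.cast_nonneg (α := ℝ)]
  have herr : ε (x n) ≤ ε (x 0 + ((n : ℝ) + 1) - 3 / 2) :=
    hε hmem (show c - 1 / 2 < x n by linarith) (by linarith)
  rw [sum_Icc_succ_top (by omega), Nat.cast_succ]
  linarith [hstep n hc]

lemma orbit_bound (hx₀ : c < x 0)
    (hstep : ∀ n, c < x n → x n + 1 - ε (x n) < x (n + 1))
    (hε : AntitoneOn ε (Set.Ioi (c - 1 / 2)))
    (hsum : ∀ n : ℕ, ∑ k ∈ Icc 1 n, ε (x 0 + k - 3 / 2) < 1 / 2) (n : ℕ) :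
    c < x n ∧ x 0 + n - ∑ k ∈ Icc 1 n, ε (x 0 + k - 3 / 2) ≤ x n := by
  induction n with
  | zero => simpa using hx₀
  | succ n ih =>
    have hlt := orbit_bound_succ hx₀ hstep hε hsum ih.1 ih.2
    have hone : (1 : ℝ) ≤ (n + 1 : ℕ) := by norm_num
    exact ⟨by linarith [hsum (n + 1)], hlt.le⟩

end OrbitBound

lemma Complex.re_add_one_sub_lt_re {z w : ℂ} {δ : ℝ} (h : ‖w - z - 1‖ < δ) :
    z.re + 1 - δ < w.re := by
  have hre : |w.re - z.re - 1| < δ := by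
    simpa using (Complex.abs_re_le_norm (w - z - 1)).trans_lt h
  linarith [(abs_lt.1 hre).1]

lemma antitoneOn_div_rpow {c₀ r : ℝ} (hc₀ : 0 ≤ c₀) (hr : 0 ≤ r) :
    AntitoneOn (fun x : ℝ ↦ c₀ / x ^ r) (Set.Ioi 0) := fun _ hx _ _ hxy ↦
  div_le_div_of_nonneg_left hc₀ (Real.rpow_pos_of_pos hx r) (Real.rpow_le_rpow hx.le hxy hr)

lemma summable_div_add_rpow {a r : ℝ} (c₀ : ℝ) (ha : 0 < a) (hr : 1 < r) :
    Summable (fun k : ℕ ↦ c₀ / (a + k) ^ r) := by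
  have h := ((Real.summable_one_div_nat_add_rpow a r).2 hr).mul_left c₀
  refine h.congr fun k ↦ ?_
  rw [abs_of_pos (by positivity), add_comm, mul_one_div]

lemma sum_range_div_rpow_le_tsum {a b c₀ r : ℝ} (ha : 0 < a) (hab : a ≤ b) (hc₀ : 0 ≤ c₀)
    (hr : 1 < r) (n : ℕ) :
    ∑ k ∈ range n, c₀ / (b + k) ^ r ≤ ∑' k : ℕ, c₀ / (a + k) ^ r := by
  have hanti := antitoneOn_div_rpow hc₀ (by linarith : 0 ≤ r)
  calc ∑ k ∈ range n, c₀ / (b + k) ^ r ≤ ∑ k ∈ range n, c₀ / (a + k) ^ r :=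
        sum_le_sum fun k _ ↦ hanti (by positivity : (0 : ℝ) < a + k)
          (add_pos_of_pos_of_nonneg (ha.trans_le hab) k.cast_nonneg) (by linarith)
    _ ≤ ∑' k : ℕ, c₀ / (a + k) ^ r :=
        (summable_div_add_rpow c₀ ha hr).sum_le_tsum _ fun k _ ↦ by positivity

lemma sum_Icc_div_rpow_le_tsum {c₀ c₁ r w : ℝ} (hc₀ : 0 ≤ c₀) (hr : 1 < r) (hc₁ : 1 / 2 < c₁)
    (hw : c₁ ≤ w) (n : ℕ) :
    ∑ k ∈ Icc 1 n, c₀ / (w + k - 3 / 2) ^ r ≤ ∑' k : ℕ, c₀ / (c₁ + ((k : ℝ) + 1) - 3 / 2) ^ r := by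
  have hw' : ∑ k ∈ Icc 1 n, c₀ / (w + k - 3 / 2) ^ r
      = ∑ k ∈ range n, c₀ / ((w - 1 / 2) + k) ^ r := by
    rw [← Ico_add_one_right_eq_Icc, sum_Ico_eq_sum_range, Nat.add_sub_cancel]
    refine sum_congr rfl fun k _ ↦ ?_
    push_cast
    ring_nf
  have hc₁' : ∑' k : ℕ, c₀ / (c₁ + ((k : ℝ) + 1) - 3 / 2) ^ r
      = ∑' k : ℕ, c₀ / ((c₁ - 1 / 2) + k) ^ r := by
    congr! 4 with k
    ring
  rw [hw', hc₁']
  exact sum_range_div_rpow_le_tsum (by linarith) (by linarith) hc₀ hr n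

theorem stmt5_general (f : ℂ → ℂ) (c₀ c₁ r : ℝ) (hc₀ : 0 < c₀) (hr : 1 < r) (hc₁ : 1 / 2 < c₁)
    (hbound : ∀ z : ℂ, c₁ < z.re → ‖f z - z - 1‖ < c₀ / z.re ^ r)
    (htail : ∑' k : ℕ, c₀ / (c₁ + ((k : ℝ) + 1) - 3 / 2) ^ r < 1 / 2) :
    ∀ z : ℂ, c₁ < z.re → ∀ n : ℕ, 1 ≤ n →
      (∀ k ≤ n, c₁ < (f^[k] z).re) ∧
      (f^[n] z).re > z.re + n - ∑ k ∈ Finset.Icc 1 n, c₀ / (z.re + (k : ℝ) - 3 / 2) ^ r := by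
  intro z hz n hn
  set x : ℕ → ℝ := fun k ↦ (f^[k] z).re
  have hstep (k : ℕ) (hk : c₁ < x k) : x k + 1 - c₀ / x k ^ r < x (k + 1) := by
    simp only [x, Function.iterate_succ_apply']
    exact Complex.re_add_one_sub_lt_re (hbound _ hk)
  have hε : AntitoneOn (fun t : ℝ ↦ c₀ / t ^ r) (Set.Ioi (c₁ - 1 / 2)) :=
    (antitoneOn_div_rpow hc₀.le (by linarith)).mono (Set.Ioi_subset_Ioi (by linarith))
  have hsum (m : ℕ) : ∑ k ∈ Icc 1 m, c₀ / (x 0 + k - 3 / 2) ^ r < 1 / 2 :=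
    (sum_Icc_div_rpow_le_tsum hc₀.le hr hc₁ hz.le m).trans_lt htail
  refine ⟨fun k _ ↦ (orbit_bound hz hstep hε hsum k).1, ?_⟩
  obtain ⟨m, rfl⟩ := Nat.exists_eq_add_of_le' hn
  obtain ⟨hc, hle⟩ := orbit_bound hz hstep hε hsum m
  exact orbit_bound_succ hz hstep hε hsum hc hle

theorem stmt5 (f : ℂ → ℂ) (c₀ c₁ r : ℝ) (hc₀ : 0 < c₀) (hr : 1 < r) (hc₁ : 1 / 2 < c₁)
    (hf : DifferentiableOn ℂ f {z : ℂ | c₁ < z.re})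
    (hbound : ∀ z : ℂ, c₁ < z.re → ‖f z - z - 1‖ < c₀ / z.re ^ r)
    (htail : ∑' k : ℕ, c₀ / (c₁ + ((k : ℝ) + 1) - 3 / 2) ^ r < 1 / 2) :
    ∀ z : ℂ, c₁ < z.re → ∀ n : ℕ, 1 ≤ n →
      (∀ k ≤ n, c₁ < (f^[k] z).re) ∧
      (f^[n] z).re > z.re + n - ∑ k ∈ Finset.Icc 1 n, c₀ / (z.re + (k : ℝ) - 3 / 2) ^ r :=
  stmt5_general f c₀ c₁ r hc₀ hr hc₁ hbound htail
end

section
/- Under the hypotheses of the previous inductive estimate (|f(z) - z - 1| < c₀/(Re z)^r on H = {Re z > c₁} with c₁ > 1/2 and ∑_{k≥1} c₀/(c₁ + k - 3/2)^r < 1/2), for every z ∈ H and n ≥ 1 one has Re(f^n(z)) > c₁ + n - 1/2 > n; in particular Re(f^n(z)) → +∞ as n → ∞. -/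
theorem stmt6 (f : ℂ → ℂ) (c₀ c₁ r : ℝ) (hc₀ : 0 < c₀) (hr : 1 < r) (hc₁ : 1 / 2 < c₁)
    (hf : DifferentiableOn ℂ f {z : ℂ | c₁ < z.re})
    (hbound : ∀ z : ℂ, c₁ < z.re → ‖f z - z - 1‖ < c₀ / z.re ^ r)
    (htail : ∑' k : ℕ, c₀ / (c₁ + ((k : ℝ) + 1) - 3 / 2) ^ r < 1 / 2) :
    ∀ z : ℂ, c₁ < z.re →
      (∀ n : ℕ, 1 ≤ n → (f^[n] z).re > c₁ + (n : ℝ) - 1 / 2 ∧ c₁ + (n : ℝ) - 1 / 2 > (n : ℝ)) ∧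
      Filter.Tendsto (fun n : ℕ => (f^[n] z).re) Filter.atTop Filter.atTop := by
  intro z hz
  have hr0 : (0:ℝ) < r := by linarith
  set t : ℕ → ℝ := fun k => c₀ / (c₁ + ((k : ℝ) + 1) - 3 / 2) ^ r with ht
  have hbpos : ∀ k : ℕ, (0:ℝ) < c₁ + ((k : ℝ) + 1) - 3 / 2 := by
    intro k
    have : (0:ℝ) ≤ (k:ℝ) := Nat.cast_nonneg k
    linarith
  have htpos : ∀ k, 0 < t k := fun k =>
    div_pos hc₀ (Real.rpow_pos_of_pos (hbpos k) r)
  -- summability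
  have hsumm : Summable t := by
    have h1 : Summable (fun k : ℕ => 1 / |(k:ℝ) + (c₁ - 1/2)| ^ r) :=
      (Real.summable_one_div_nat_add_rpow (c₁ - 1/2) r).mpr hr
    have h2 := h1.mul_left c₀
    refine h2.congr fun k => ?_
    have h3 : |(k:ℝ) + (c₁ - 1/2)| = c₁ + ((k:ℝ) + 1) - 3/2 := by
      rw [abs_of_pos]; · ring
      · have : (0:ℝ) ≤ (k:ℝ) := Nat.cast_nonneg k; linarith
    rw [h3]; ring
  have hpart : ∀ n : ℕ, ∑ k ∈ Finset.range n, t k < 1 / 2 := by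
    intro n
    exact lt_of_le_of_lt (Summable.sum_le_tsum _ (fun k _ => (htpos k).le) hsumm) htail
  -- one-step estimate
  have hstep : ∀ w : ℂ, c₁ < w.re → w.re + 1 - c₀ / w.re ^ r < (f w).re := by
    intro w hw
    have hb := hbound w hw
    have h1 : |(f w - w - 1).re| ≤ ‖f w - w - 1‖ := Complex.abs_re_le_norm _
    have h2 : (f w - w - 1).re = (f w).re - w.re - 1 := by simp
    have h3 : -((f w).re - w.re - 1) ≤ |(f w - w - 1).re| := by
      rw [h2]; exact neg_le_abs _
    linarith
  -- monotone division
  have hmono : ∀ a b : ℝ, 0 < a → a < b → c₀ / b ^ r < c₀ / a ^ r := by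
    intro a b ha hab
    exact div_lt_div_of_pos_left hc₀ (Real.rpow_pos_of_pos ha r)
      (Real.rpow_lt_rpow ha.le hab hr0)
  -- key induction
  have key : ∀ n : ℕ, 1 ≤ n → c₁ + (n:ℝ) - ∑ k ∈ Finset.range n, t k < (f^[n] z).re := by
    intro n hn
    induction n, hn using Nat.le_induction with
    | base =>
      have h0 : c₀ / z.re ^ r < t 0 := by
        have := hmono (c₁ + ((0:ℕ):ℝ) + 1 - 3/2) z.re (by push_cast; linarith) (by push_cast; linarith)
        calc c₀ / z.re ^ r < c₀ / (c₁ + ((0:ℕ):ℝ) + 1 - 3/2) ^ r := by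
              have h := hmono (c₁ + ((0:ℕ):ℝ) + 1 - 3/2) z.re (by push_cast; linarith)
                (by push_cast; linarith)
              exact h
          _ = t 0 := by rw [ht]; norm_num
      have hs := hstep z hz
      simp only [Function.iterate_one, Finset.sum_range_one]
      have ht0 : t 0 = c₀ / (c₁ + ((0:ℕ):ℝ) + 1 - 3/2) ^ r := by rw [ht]; norm_num
      push_cast
      linarith
    | succ n hn ih =>
      have hlt : c₁ + (n:ℝ) - 1/2 < (f^[n] z).re := by
        have := hpart n; linarith
      have hgc : c₁ < (f^[n] z).re := by
        have h1 : (1:ℝ) ≤ (n:ℝ) := by exact_mod_cast hn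
        linarith
      have hs := hstep (f^[n] z) hgc
      have htn : c₀ / (f^[n] z).re ^ r < t n := by
        have hb : (0:ℝ) < c₁ + ((n:ℝ) + 1) - 3/2 := hbpos n
        have h := hmono (c₁ + ((n:ℝ) + 1) - 3/2) (f^[n] z).re hb (by linarith)
        exact h
      rw [Function.iterate_succ_apply', Finset.sum_range_succ]
      push_cast
      linarith
  have key2 : ∀ n : ℕ, 1 ≤ n → (f^[n] z).re > c₁ + (n:ℝ) - 1/2 := by
    intro n hn
    have := key n hn
    have := hpart n
    linarith
  constructor
  · intro n hn
    exact ⟨key2 n hn, by linarith⟩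
  · apply Filter.tendsto_atTop_mono' _ _ tendsto_natCast_atTop_atTop
    filter_upwards [Filter.eventually_ge_atTop 1] with n hn
    have := key2 n hn
    linarith
end

section
/- Let h : D → D be a holomorphic self-map of the unit disc and suppose ∑_{n=1}^∞ (1 - |h^n(z₀)|) < ∞ for some z₀ ∈ D. Then ∑_{n=1}^∞ (1 - |h^n(z)|) < ∞ for every z ∈ D. -/
/-!
The Möbius map `mobius a z = (a - z) / (1 - conj a * z)` is an involutive automorphism of the
unit disc swapping `a` and `0`, so conjugating by such maps turns the Schwarz lemma into the
Schwarz–Pick lemma: a holomorphic self-map of the disc does not increase the pseudo-hyperbolic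
distance `‖mobius a z‖`. Hence `‖mobius (hⁿ z₀) (hⁿ z)‖ ≤ r := ‖mobius z₀ z‖ < 1` for all `n`.
The identity `‖1 - conj b * a‖² - ‖b - a‖² = (1 - ‖a‖²)(1 - ‖b‖²)` then gives
`(1 - r²)(1 - ‖hⁿ z‖) ≤ 4 (1 - ‖hⁿ z₀‖)`, and summability transfers by comparison.
-/

open Metric Set Function ComplexConjugate

noncomputable def mobius (a z : ℂ) : ℂ := (a - z) / (1 - conj a * z)

lemma norm_one_sub_conj_mul_sq_sub_norm_sub_sq (a b : ℂ) :
    ‖1 - conj a * b‖ ^ 2 - ‖a - b‖ ^ 2 = (1 - ‖a‖ ^ 2) * (1 - ‖b‖ ^ 2) := by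
  simp only [Complex.sq_norm, Complex.normSq_apply, Complex.sub_re, Complex.sub_im,
    Complex.mul_re, Complex.mul_im, Complex.one_re, Complex.one_im, Complex.conj_re,
    Complex.conj_im]
  ring

lemma one_sub_norm_le_norm_one_sub_conj_mul {a b : ℂ} (ha : ‖a‖ ≤ 1) :
    1 - ‖b‖ ≤ ‖1 - conj a * b‖ := by
  have hab : ‖conj a * b‖ ≤ ‖b‖ := by
    rw [norm_mul, Complex.norm_conj]
    exact mul_le_of_le_one_left (norm_nonneg b) ha
  have := norm_sub_norm_le (1 : ℂ) (conj a * b)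
  rw [norm_one] at this
  linarith

lemma norm_one_sub_conj_mul_pos {a b : ℂ} (ha : ‖a‖ ≤ 1) (hb : ‖b‖ < 1) :
    0 < ‖1 - conj a * b‖ :=
  (sub_pos.mpr hb).trans_le (one_sub_norm_le_norm_one_sub_conj_mul ha)

lemma one_sub_conj_mul_ne_zero {a b : ℂ} (ha : ‖a‖ ≤ 1) (hb : ‖b‖ < 1) :
    1 - conj a * b ≠ 0 :=
  norm_pos_iff.mp (norm_one_sub_conj_mul_pos ha hb)

lemma one_sub_norm_mobius_sq_mul {a b : ℂ} (ha : ‖a‖ ≤ 1) (hb : ‖b‖ < 1) :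
    (1 - ‖mobius a b‖ ^ 2) * ‖1 - conj a * b‖ ^ 2 = (1 - ‖a‖ ^ 2) * (1 - ‖b‖ ^ 2) := by
  have hD := (norm_one_sub_conj_mul_pos ha hb).ne'
  rw [← norm_one_sub_conj_mul_sq_sub_norm_sub_sq, mobius, norm_div, div_pow, sub_mul,
    div_mul_cancel₀ _ (pow_ne_zero 2 hD), one_mul]

lemma norm_mobius_lt_one {a b : ℂ} (ha : ‖a‖ < 1) (hb : ‖b‖ < 1) : ‖mobius a b‖ < 1 := by
  have key := one_sub_norm_mobius_sq_mul ha.le hb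
  have hprod : 0 < (1 - ‖a‖ ^ 2) * (1 - ‖b‖ ^ 2) := by
    apply mul_pos <;> nlinarith [norm_nonneg a, norm_nonneg b]
  have : 0 < 1 - ‖mobius a b‖ ^ 2 := by
    rw [← key] at hprod
    exact pos_of_mul_pos_left hprod (by positivity)
  nlinarith [norm_nonneg (mobius a b)]

lemma mapsTo_mobius {a : ℂ} (ha : ‖a‖ < 1) : MapsTo (mobius a) (ball 0 1) (ball 0 1) := by
  intro z hz
  rw [mem_ball_zero_iff] at *
  exact norm_mobius_lt_one ha hz

lemma differentiableOn_mobius {a : ℂ} (ha : ‖a‖ ≤ 1) :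
    DifferentiableOn ℂ (mobius a) (ball 0 1) := by
  refine DifferentiableOn.div (by fun_prop) (by fun_prop) fun z hz => ?_
  exact one_sub_conj_mul_ne_zero ha (mem_ball_zero_iff.mp hz)

@[simp]
lemma mobius_self (a : ℂ) : mobius a a = 0 := by simp [mobius]

@[simp]
lemma mobius_zero (a : ℂ) : mobius a 0 = a := by simp [mobius]

lemma mobius_mobius {a b : ℂ} (ha : ‖a‖ < 1) (hb : ‖b‖ < 1) : mobius a (mobius a b) = b := by
  have hb' := one_sub_conj_mul_ne_zero ha.le hb
  have ha' := one_sub_conj_mul_ne_zero ha.le ha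
  have hb'' : 1 - b * conj a ≠ 0 := by rwa [mul_comm]
  have hden : 1 - conj a * mobius a b = (1 - conj a * a) / (1 - conj a * b) := by
    rw [mobius]
    field_simp
    ring
  rw [mobius, hden, div_eq_iff (div_ne_zero ha' hb'), mobius]
  field_simp
  ring

lemma norm_mobius_le_of_mapsTo_ball {f : ℂ → ℂ} (hd : DifferentiableOn ℂ f (ball 0 1))
    (hm : MapsTo f (ball 0 1) (ball 0 1)) {a z : ℂ} (ha : ‖a‖ < 1) (hz : ‖z‖ < 1) :
    ‖mobius (f a) (f z)‖ ≤ ‖mobius a z‖ := by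
  have hfa : ‖f a‖ < 1 := mem_ball_zero_iff.mp (hm (mem_ball_zero_iff.mpr ha))
  set g : ℂ → ℂ := mobius (f a) ∘ f ∘ mobius a
  have hgd : DifferentiableOn ℂ g (ball 0 1) :=
    (differentiableOn_mobius hfa.le).comp (hd.comp (differentiableOn_mobius ha.le)
      (mapsTo_mobius ha)) (hm.comp (mapsTo_mobius ha))
  have hgm : MapsTo g (ball 0 1) (ball 0 1) :=
    (mapsTo_mobius hfa).comp (hm.comp (mapsTo_mobius ha))
  have hg0 : g 0 = 0 := by simp [g]
  have := Complex.norm_le_norm_of_mapsTo_ball hgd (hgm.mono_right ball_subset_closedBall) hg0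
    (norm_mobius_lt_one ha hz)
  simpa [g, mobius_mobius ha hz] using this

lemma norm_mobius_iterate_le {f : ℂ → ℂ} (hd : DifferentiableOn ℂ f (ball 0 1))
    (hm : MapsTo f (ball 0 1) (ball 0 1)) {a z : ℂ} (ha : a ∈ ball (0 : ℂ) 1)
    (hz : z ∈ ball (0 : ℂ) 1) (n : ℕ) :
    ‖mobius (f^[n] a) (f^[n] z)‖ ≤ ‖mobius a z‖ := by
  induction n with
  | zero => rfl
  | succ n ih =>
    rw [iterate_succ_apply', iterate_succ_apply']
    exact (norm_mobius_le_of_mapsTo_ball hd hm (mem_ball_zero_iff.mp (hm.iterate n ha))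
      (mem_ball_zero_iff.mp (hm.iterate n hz))).trans ih

lemma one_sub_norm_mobius_sq_mul_one_sub_norm_le {a b : ℂ} (ha : ‖a‖ < 1) (hb : ‖b‖ < 1) :
    (1 - ‖mobius b a‖ ^ 2) * (1 - ‖a‖) ≤ 4 * (1 - ‖b‖) := by
  have key := one_sub_norm_mobius_sq_mul hb.le ha
  have hden := one_sub_norm_le_norm_one_sub_conj_mul (a := b) (b := a) hb.le
  have hcoef : 0 ≤ 1 - ‖mobius b a‖ ^ 2 := by
    nlinarith [norm_mobius_lt_one hb ha, norm_nonneg (mobius b a)]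
  have ha0 : 0 < 1 - ‖a‖ := sub_pos.mpr ha
  have hb0 : 0 < 1 - ‖b‖ := sub_pos.mpr hb
  have : (1 - ‖mobius b a‖ ^ 2) * (1 - ‖a‖) * (1 - ‖a‖) ≤ 4 * (1 - ‖b‖) * (1 - ‖a‖) :=
    calc (1 - ‖mobius b a‖ ^ 2) * (1 - ‖a‖) * (1 - ‖a‖)
        = (1 - ‖mobius b a‖ ^ 2) * (1 - ‖a‖) ^ 2 := by ring
      _ ≤ (1 - ‖mobius b a‖ ^ 2) * ‖1 - conj b * a‖ ^ 2 := by gcongr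
      _ = (1 - ‖b‖) * (1 - ‖a‖) * ((1 + ‖b‖) * (1 + ‖a‖)) := by rw [key]; ring
      _ ≤ (1 - ‖b‖) * (1 - ‖a‖) * (2 * 2) := by gcongr <;> linarith
      _ = 4 * (1 - ‖b‖) * (1 - ‖a‖) := by ring
  exact le_of_mul_le_mul_right this ha0

lemma one_sub_norm_le_of_norm_mobius_le {a b : ℂ} {r : ℝ} (ha : ‖a‖ < 1) (hb : ‖b‖ < 1)
    (hr : r < 1) (hab : ‖mobius b a‖ ≤ r) : 1 - ‖a‖ ≤ 4 / (1 - r ^ 2) * (1 - ‖b‖) := by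
  have hr2 : 0 < 1 - r ^ 2 := by nlinarith [(norm_nonneg _).trans hab]
  rw [div_mul_eq_mul_div, le_div_iff₀ hr2, mul_comm]
  calc (1 - r ^ 2) * (1 - ‖a‖)
      ≤ (1 - ‖mobius b a‖ ^ 2) * (1 - ‖a‖) := by gcongr
    _ ≤ 4 * (1 - ‖b‖) := one_sub_norm_mobius_sq_mul_one_sub_norm_le ha hb

theorem stmt19 (h : ℂ → ℂ) (hd : DifferentiableOn ℂ h (Metric.ball 0 1))
    (hm : Set.MapsTo h (Metric.ball 0 1) (Metric.ball 0 1))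
    (z₀ : ℂ) (hz₀ : z₀ ∈ Metric.ball (0 : ℂ) 1)
    (hsum : Summable fun n : ℕ => 1 - ‖h^[n] z₀‖) :
    ∀ z ∈ Metric.ball (0 : ℂ) 1, Summable fun n : ℕ => 1 - ‖h^[n] z‖ := by
  intro z hz
  have hnorm : ∀ {w} n, w ∈ ball (0 : ℂ) 1 → ‖h^[n] w‖ < 1 := fun n hw =>
    mem_ball_zero_iff.mp (hm.iterate n hw)
  have hr : ‖mobius z₀ z‖ < 1 :=
    norm_mobius_lt_one (mem_ball_zero_iff.mp hz₀) (mem_ball_zero_iff.mp hz)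
  refine .of_nonneg_of_le (fun n => sub_nonneg.mpr (hnorm n hz).le) (fun n => ?_)
    (hsum.mul_left (4 / (1 - ‖mobius z₀ z‖ ^ 2)))
  exact one_sub_norm_le_of_norm_mobius_le (hnorm n hz) (hnorm n hz₀) hr
    (norm_mobius_iterate_le hd hm hz₀ hz n)
end
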